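/- arXiv:1802.04922 — 2 statements merged into one kernel-verified Lean document; each statement's English description precedes it below -/
import Mathlib

section
/- Let k₁ ≠ ±k₂ be nonzero real numbers with k₁^3 + k₂^3 ≠ 0, η_j = (1/2)(k_j x - k_j^5 t - c_j), b₀ = sqrt( ((k₁+k₂)^3 (k₁^2 + k₁k₂ + k₂^2)) / ((k₁^3+k₂^3)(k₁-k₂)^2) ), b₁ = ((k₁+k₂)^3/(k₁^3+k₂^3))(k₁^2+k₂^2). Then u(x,t) = 3[ b₁ + k₂^2 b₀ cosh(2η₁) + k₁^2 b₀ cosh(2η₂) ] / [ cosh(η₁+η₂) + b₀ cosh(η₁-η₂) ]^2 satisfies the Sawada–Kotera equation u_t + u_xxxxx + 5 u u_xxx + 5 u_x u_xx + 5 u^2 u_x = 0. -/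
/-- Partial derivative in the first (spatial) variable. -/
noncomputable def dx (u : ℝ → ℝ → ℝ) : ℝ → ℝ → ℝ := fun x t => deriv (fun y => u y t) x

/-- Partial derivative in the second (temporal) variable. -/
noncomputable def dt (u : ℝ → ℝ → ℝ) : ℝ → ℝ → ℝ := fun x t => deriv (fun s => u x s) t

/-!
With `τ = 1 + b₀ e^{θ₁} + b₀ e^{θ₂} + e^{θ₁ + θ₂}`, `θⱼ = 2ηⱼ`, the given `u` is `6 ∂ₓ² log τ`: the
denominator is `τ / (2 e^{η₁ + η₂})`, and the numerator matches because
`2 b₁ = (k₁ + k₂)² + b₀² (k₁ - k₂)²`. Hirota's substitution `w = ∂ₓ log τ` turns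
`(Dₓ⁶ + Dₓ D_t) τ·τ / 2τ²` into the potential SK equation `w_t + w₅ₓ + 30 w_x w₃ₓ + 60 w_x³`,
whose `x`-derivative is SK for `u = 6 w_x`. On a sum of exponentials `∑ aᵢ e^{θᵢ}` the bilinear
form is `∑ᵢⱼ aᵢ aⱼ P(kᵢ - kⱼ, νᵢ - νⱼ) e^{θᵢ + θⱼ} / 2` with `P(k, ν) = k⁶ - k ν`; the dispersion
relation `ν = k⁵` kills the one-soliton pairs and `b₀` is exactly the phase shift cancelling the
two cross pairs.
-/

open Function Real
open scoped ContDiff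

section Partials

variable {f : ℝ → ℝ → ℝ}

theorem hasDerivAt_dx (hf : Differentiable ℝ (uncurry f)) (x t : ℝ) :
    HasDerivAt (fun y => f y t) (dx f x t) x :=
  ((hf.comp (differentiable_id.prodMk (differentiable_const t))) x).hasDerivAt

theorem hasDerivAt_dt (hf : Differentiable ℝ (uncurry f)) (x t : ℝ) :
    HasDerivAt (fun s => f x s) (dt f x t) t :=
  ((hf.comp ((differentiable_const x).prodMk differentiable_id)) t).hasDerivAt

theorem uncurry_dx (hf : Differentiable ℝ (uncurry f)) :
    uncurry (dx f) = fun p => fderiv ℝ (uncurry f) p (1, 0) := by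
  funext ⟨x, t⟩
  exact ((hf (x, t)).hasFDerivAt.comp_hasDerivAt x
    ((hasDerivAt_id x).prodMk (hasDerivAt_const x t))).deriv

theorem uncurry_dt (hf : Differentiable ℝ (uncurry f)) :
    uncurry (dt f) = fun p => fderiv ℝ (uncurry f) p (0, 1) := by
  funext ⟨x, t⟩
  exact ((hf (x, t)).hasFDerivAt.comp_hasDerivAt t
    ((hasDerivAt_const t x).prodMk (hasDerivAt_id t))).deriv

theorem contDiff_uncurry_dx (hf : ContDiff ℝ ∞ (uncurry f)) : ContDiff ℝ ∞ (uncurry (dx f)) := by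
  rw [uncurry_dx (hf.differentiable (by simp))]
  exact (hf.fderiv_right le_rfl).clm_apply contDiff_const

theorem contDiff_uncurry_dt (hf : ContDiff ℝ ∞ (uncurry f)) : ContDiff ℝ ∞ (uncurry (dt f)) := by
  rw [uncurry_dt (hf.differentiable (by simp))]
  exact (hf.fderiv_right le_rfl).clm_apply contDiff_const

theorem dt_dx_comm (hf : ContDiff ℝ ∞ (uncurry f)) : dt (dx f) = dx (dt f) := by
  funext x t
  have hF := hf.differentiable (by simp)
  have hF' : Differentiable ℝ (fderiv ℝ (uncurry f)) :=
    (hf.fderiv_right (m := ∞) le_rfl).differentiable (by simp)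
  have hpartial (v w : ℝ × ℝ) : fderiv ℝ (fun p => fderiv ℝ (uncurry f) p v) (x, t) w
      = fderiv ℝ (fderiv ℝ (uncurry f)) (x, t) w v := by
    rw [fderiv_clm_apply (hF' _) (differentiableAt_const v)]
    simp
  have hdtdx : dt (dx f) x t = fderiv ℝ (uncurry (dx f)) (x, t) (0, 1) :=
    congrFun (uncurry_dt ((contDiff_uncurry_dx hf).differentiable (by simp))) (x, t)
  have hdxdt : dx (dt f) x t = fderiv ℝ (uncurry (dt f)) (x, t) (1, 0) :=
    congrFun (uncurry_dx ((contDiff_uncurry_dt hf).differentiable (by simp))) (x, t)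
  rw [hdtdx, hdxdt, uncurry_dx hF, uncurry_dt hF, hpartial, hpartial]
  exact (hf.contDiffAt.isSymmSndFDerivAt (by simpa using ENat.LEInfty.out)).eq _ _

theorem dx_const_mul (c : ℝ) (f : ℝ → ℝ → ℝ) :
    dx (fun x t => c * f x t) = fun x t => c * dx f x t := by
  funext x t
  exact deriv_const_mul_field c

theorem dt_const_mul (c : ℝ) (f : ℝ → ℝ → ℝ) :
    dt (fun x t => c * f x t) = fun x t => c * dt f x t := by
  funext x t
  exact deriv_const_mul_field c

theorem dx_iterate_apply (f : ℝ → ℝ → ℝ) (n : ℕ) (x t : ℝ) :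
    (dx^[n] f) x t = iteratedDeriv n (fun y => f y t) x := by
  induction n generalizing x with
  | zero => rfl
  | succ n ih =>
    rw [Function.iterate_succ_apply', iteratedDeriv_succ]
    exact congrArg (deriv · x) (funext ih)

theorem dx_log (hf : Differentiable ℝ (uncurry f)) (hf0 : ∀ x t, f x t ≠ 0) :
    dx (fun x t => log (f x t)) = fun x t => dx f x t / f x t := by
  funext x t
  exact ((hasDerivAt_dx hf x t).log (hf0 x t)).deriv

theorem dx_dx_log (hf : ContDiff ℝ ∞ (uncurry f)) (hf0 : ∀ x t, f x t ≠ 0) (x t : ℝ) :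
    dx (dx fun x t => log (f x t)) x t = (f x t * dx (dx f) x t - dx f x t ^ 2) / f x t ^ 2 := by
  have hf1 := hf.differentiable (by simp)
  rw [dx_log hf1 hf0, dx, ((hasDerivAt_dx ((contDiff_uncurry_dx hf).differentiable (by simp)) x t).fun_div
    (hasDerivAt_dx hf1 x t) (hf0 x t)).deriv]
  ring

end Partials

section SawadaKotera

noncomputable def sawadaKotera (u : ℝ → ℝ → ℝ) : ℝ → ℝ → ℝ := fun x t =>
  dt u x t + dx (dx (dx (dx (dx u)))) x t + 5 * u x t * dx (dx (dx u)) x t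
    + 5 * dx u x t * dx (dx u) x t + 5 * (u x t) ^ 2 * dx u x t

noncomputable def potentialSawadaKotera (w : ℝ → ℝ → ℝ) : ℝ → ℝ → ℝ := fun x t =>
  dt w x t + dx (dx (dx (dx (dx w)))) x t + 30 * dx w x t * dx (dx (dx w)) x t
    + 60 * (dx w x t) ^ 3

/-- `(Dₓ⁶ + Dₓ D_t) τ·τ / 2` in Hirota's bilinear notation. -/
noncomputable def hirotaSawadaKotera (τ : ℝ → ℝ → ℝ) : ℝ → ℝ → ℝ := fun x t =>
  τ x t * (dx^[6] τ) x t - 6 * dx τ x t * (dx^[5] τ) x t + 15 * (dx^[2] τ) x t * (dx^[4] τ) x t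
    - 10 * (dx^[3] τ) x t ^ 2 + τ x t * dt (dx τ) x t - dx τ x t * dt τ x t

theorem sawadaKotera_of_potentialSawadaKotera {w : ℝ → ℝ → ℝ} (hw : ContDiff ℝ ∞ (uncurry w))
    (h : ∀ x t, potentialSawadaKotera w x t = 0) (x t : ℝ) :
    sawadaKotera (fun x t => 6 * dx w x t) x t = 0 := by
  have hdx {g : ℝ → ℝ → ℝ} (hg : ContDiff ℝ ∞ (uncurry g)) :
      HasDerivAt (fun y => g y t) (dx g x t) x :=
    hasDerivAt_dx (hg.differentiable (by simp)) x t
  have h1 := contDiff_uncurry_dx hw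
  have h3 := contDiff_uncurry_dx (contDiff_uncurry_dx h1)
  have h5 := contDiff_uncurry_dx (contDiff_uncurry_dx h3)
  have hderiv : HasDerivAt (fun y => potentialSawadaKotera w y t)
      (dx (dt w) x t + dx (dx (dx (dx (dx (dx w))))) x t
        + 30 * (dx (dx w) x t * dx (dx (dx w)) x t + dx w x t * dx (dx (dx (dx w))) x t)
        + 180 * (dx w x t) ^ 2 * dx (dx w) x t) x := by
    refine ((((hdx (contDiff_uncurry_dt hw)).add (hdx h5)).add
      (((hdx h1).const_mul 30).mul (hdx h3))).add (((hdx h1).pow 3).const_mul 60)).congr_deriv ?_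
    push_cast
    ring
  have hzero : HasDerivAt (fun y => potentialSawadaKotera w y t) 0 x := by
    simp only [h]
    exact hasDerivAt_const x 0
  simp only [sawadaKotera, dx_const_mul, dt_const_mul, dt_dx_comm hw]
  linear_combination 6 * hderiv.unique hzero

theorem iteratedDeriv_succ_eq_sum_of_deriv_eq_mul {f g : ℝ → ℝ} (hf : ContDiff ℝ ∞ f)
    (hg : ContDiff ℝ ∞ g) (h : deriv f = g * f) (n : ℕ) (x : ℝ) :
    iteratedDeriv (n + 1) f x = ∑ i ∈ Finset.range (n + 1),
      n.choose i * iteratedDeriv i g x * iteratedDeriv (n - i) f x := by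
  rw [iteratedDeriv_succ', h, iteratedDeriv_mul (hg.contDiffAt.of_le (by exact_mod_cast le_top))
    (hf.contDiffAt.of_le (by exact_mod_cast le_top))]

theorem hirotaD6_eq_of_deriv_eq_mul {f g : ℝ → ℝ} (hf : ContDiff ℝ ∞ f) (hg : ContDiff ℝ ∞ g)
    (h : deriv f = g * f) (x : ℝ) :
    f x * iteratedDeriv 6 f x - 6 * deriv f x * iteratedDeriv 5 f x
      + 15 * iteratedDeriv 2 f x * iteratedDeriv 4 f x - 10 * iteratedDeriv 3 f x ^ 2
      = f x ^ 2 * (iteratedDeriv 5 g x + 30 * deriv g x * iteratedDeriv 3 g x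
        + 60 * deriv g x ^ 3) := by
  have e n := iteratedDeriv_succ_eq_sum_of_deriv_eq_mul hf hg h n x
  have e0 := e 0
  have e1 := e 1
  have e2 := e 2
  have e3 := e 3
  have e4 := e 4
  have e5 := e 5
  norm_num [Finset.sum_range_succ, Nat.choose] at e0 e1 e2 e3 e4 e5
  rw [e5, e4, e3, e2, e1, e0]
  ring

theorem hirotaSawadaKotera_eq {τ : ℝ → ℝ → ℝ} (hτ : ContDiff ℝ ∞ (uncurry τ))
    (hτ0 : ∀ x t, τ x t ≠ 0) (x t : ℝ) :
    hirotaSawadaKotera τ x t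
      = τ x t ^ 2 * potentialSawadaKotera (dx fun x t => log (τ x t)) x t := by
  have hτ1 := hτ.differentiable (by simp)
  set w := dx fun x t => log (τ x t)
  have hw : w = fun x t => dx τ x t / τ x t := dx_log hτ1 hτ0
  have hw_smooth : ContDiff ℝ ∞ (uncurry w) :=
    contDiff_uncurry_dx (hτ.log fun p => hτ0 p.1 p.2)
  have hwt : dt w x t * τ x t ^ 2 = τ x t * dt (dx τ) x t - dx τ x t * dt τ x t := by
    rw [hw, dt, ((hasDerivAt_dt ((contDiff_uncurry_dx hτ).differentiable (by simp)) x t).fun_div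
      (hasDerivAt_dt hτ1 x t) (hτ0 x t)).deriv]
    field_simp [hτ0 x t]
  have hwx : τ x t * (dx^[6] τ) x t - 6 * dx τ x t * (dx^[5] τ) x t
      + 15 * (dx^[2] τ) x t * (dx^[4] τ) x t - 10 * (dx^[3] τ) x t ^ 2
      = τ x t ^ 2 * ((dx^[5] w) x t + 30 * dx w x t * (dx^[3] w) x t + 60 * dx w x t ^ 3) := by
    simp only [dx_iterate_apply]
    refine hirotaD6_eq_of_deriv_eq_mul (hτ.comp (contDiff_id.prodMk contDiff_const))
      (hw_smooth.comp (contDiff_id.prodMk contDiff_const)) ?_ x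
    funext y
    simp only [hw, Pi.mul_apply]
    exact (div_mul_cancel₀ _ (hτ0 y t)).symm
  rw [hirotaSawadaKotera, potentialSawadaKotera, show dx (dx (dx (dx (dx w)))) = dx^[5] w from rfl,
    show dx (dx (dx w)) = dx^[3] w from rfl]
  linear_combination hwx - hwt

theorem sawadaKotera_of_hirotaSawadaKotera {τ : ℝ → ℝ → ℝ} (hτ : ContDiff ℝ ∞ (uncurry τ))
    (hτ0 : ∀ x t, τ x t ≠ 0) (h : ∀ x t, hirotaSawadaKotera τ x t = 0) (x t : ℝ) :
    sawadaKotera (fun x t => 6 * dx (dx fun x t => log (τ x t)) x t) x t = 0 := by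
  refine sawadaKotera_of_potentialSawadaKotera
    (contDiff_uncurry_dx (f := fun x t => log (τ x t)) (hτ.log fun p => hτ0 p.1 p.2))
    (fun x t => ?_) x t
  have := hirotaSawadaKotera_eq hτ hτ0 x t
  rw [h] at this
  exact (mul_eq_zero.1 this.symm).resolve_left (pow_ne_zero 2 (hτ0 x t))

end SawadaKotera

section PlaneWaves

variable {ι : Type*} [Fintype ι] (a k ν c : ι → ℝ)

noncomputable def planeWaves : ℝ → ℝ → ℝ := fun x t => ∑ i, a i * exp (k i * x - ν i * t - c i)

theorem contDiff_uncurry_planeWaves : ContDiff ℝ ∞ (uncurry (planeWaves a k ν c)) := by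
  unfold planeWaves
  fun_prop

theorem dx_planeWaves : dx (planeWaves a k ν c) = planeWaves (fun i => a i * k i) k ν c := by
  funext x t
  refine (HasDerivAt.fun_sum fun i _ => ?_).deriv
  refine ((((hasDerivAt_id x).const_mul (k i)).sub_const _).sub_const _).exp.const_mul (a i)
    |>.congr_deriv ?_
  simp only [id, mul_one]
  ring

theorem dt_planeWaves : dt (planeWaves a k ν c) = planeWaves (fun i => -(a i * ν i)) k ν c := by
  funext x t
  refine (HasDerivAt.fun_sum fun i _ => ?_).deriv
  refine ((((hasDerivAt_id t).const_mul (ν i)).const_sub _).sub_const _).exp.const_mul (a i)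
    |>.congr_deriv ?_
  simp only [id, mul_one]
  ring

theorem dx_iterate_planeWaves (n : ℕ) :
    dx^[n] (planeWaves a k ν c) = planeWaves (fun i => a i * k i ^ n) k ν c := by
  induction n with
  | zero => simp
  | succ n ih =>
    rw [Function.iterate_succ_apply', ih, dx_planeWaves]
    simp only [pow_succ, mul_assoc]

theorem hirotaSawadaKotera_planeWaves (x t : ℝ) :
    hirotaSawadaKotera (planeWaves a k ν c) x t = ∑ i, ∑ j, a i * a j
      * (((k i - k j) ^ 6 - (k i - k j) * (ν i - ν j)) / 2)
      * exp (k i * x - ν i * t - c i) * exp (k j * x - ν j * t - c j) := by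
  set E := fun i => exp (k i * x - ν i * t - c i)
  set q := fun i j => k i ^ 6 - 6 * k j * k i ^ 5 + 15 * k j ^ 2 * k i ^ 4 - 10 * k j ^ 3 * k i ^ 3
    - k i * ν i + k j * ν i
  have hlhs : hirotaSawadaKotera (planeWaves a k ν c) x t
      = ∑ i, ∑ j, a i * a j * q i j * E i * E j := by
    simp only [hirotaSawadaKotera, dx_iterate_planeWaves, dt_planeWaves, dx_planeWaves, planeWaves,
      sq, mul_assoc, Finset.mul_sum, Finset.sum_mul, ← Finset.sum_sub_distrib, ← Finset.sum_add_distrib]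
    refine Finset.sum_congr rfl fun i _ => Finset.sum_congr rfl fun j _ => ?_
    simp only [q, E]
    ring
  have hswap : ∑ i, ∑ j, a i * a j * q i j * E i * E j = ∑ i, ∑ j, a i * a j * q j i * E i * E j := by
    rw [Finset.sum_comm]
    refine Finset.sum_congr rfl fun i _ => Finset.sum_congr rfl fun j _ => ?_
    ring
  have hsymm : ∑ i, ∑ j, a i * a j * q i j * E i * E j + ∑ i, ∑ j, a i * a j * q j i * E i * E j
      = 2 * ∑ i, ∑ j, a i * a j * (((k i - k j) ^ 6 - (k i - k j) * (ν i - ν j)) / 2) * E i * E j := by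
    simp only [Finset.mul_sum, ← Finset.sum_add_distrib]
    refine Finset.sum_congr rfl fun i _ => Finset.sum_congr rfl fun j _ => ?_
    ring
  rw [hlhs]
  linarith

end PlaneWaves

section TwoSoliton

variable (k₁ k₂ c₁ c₂ b₀ : ℝ)

noncomputable def twoSolitonTau : ℝ → ℝ → ℝ :=
  planeWaves ![1, b₀, b₀, 1] ![0, k₁, k₂, k₁ + k₂] ![0, k₁ ^ 5, k₂ ^ 5, k₁ ^ 5 + k₂ ^ 5]
    ![0, c₁, c₂, c₁ + c₂]

theorem hirotaSawadaKotera_twoSolitonTau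
    (h : b₀ ^ 2 * ((k₁ - k₂) ^ 2 * (k₁ ^ 2 - k₁ * k₂ + k₂ ^ 2))
      = (k₁ + k₂) ^ 2 * (k₁ ^ 2 + k₁ * k₂ + k₂ ^ 2)) (x t : ℝ) :
    hirotaSawadaKotera (twoSolitonTau k₁ k₂ c₁ c₂ b₀) x t = 0 := by
  have hE : exp ((k₁ + k₂) * x - (k₁ ^ 5 + k₂ ^ 5) * t - (c₁ + c₂))
      = exp (k₁ * x - k₁ ^ 5 * t - c₁) * exp (k₂ * x - k₂ ^ 5 * t - c₂) := by
    rw [← exp_add]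
    ring_nf
  simp only [twoSolitonTau, hirotaSawadaKotera_planeWaves, Fin.sum_univ_succ, Fin.sum_univ_zero,
    Matrix.cons_val_zero, Matrix.cons_val_succ, zero_mul, sub_zero, exp_zero, hE]
  linear_combination (-5 * k₁ * k₂ * exp (k₁ * x - k₁ ^ 5 * t - c₁) * exp (k₂ * x - k₂ ^ 5 * t - c₂)) * h

theorem twoSolitonTau_pos (hb₀ : 0 ≤ b₀) (x t : ℝ) : 0 < twoSolitonTau k₁ k₂ c₁ c₂ b₀ x t := by
  simp only [twoSolitonTau, planeWaves, Fin.sum_univ_succ, Fin.sum_univ_zero, Matrix.cons_val_zero,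
    Matrix.cons_val_succ]
  positivity

theorem six_dx_dx_log_twoSolitonTau {b₁ : ℝ} (hb₀ : 0 ≤ b₀)
    (hb₁ : 2 * b₁ = (k₁ + k₂) ^ 2 + b₀ ^ 2 * (k₁ - k₂) ^ 2) {x t η₁ η₂ : ℝ}
    (h₁ : k₁ * x - k₁ ^ 5 * t - c₁ = 2 * η₁) (h₂ : k₂ * x - k₂ ^ 5 * t - c₂ = 2 * η₂) :
    6 * dx (dx fun x t => log (twoSolitonTau k₁ k₂ c₁ c₂ b₀ x t)) x t
      = 3 * (b₁ + k₂ ^ 2 * b₀ * cosh (2 * η₁) + k₁ ^ 2 * b₀ * cosh (2 * η₂))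
        / (cosh (η₁ + η₂) + b₀ * cosh (η₁ - η₂)) ^ 2 := by
  have hE : exp ((k₁ + k₂) * x - (k₁ ^ 5 + k₂ ^ 5) * t - (c₁ + c₂)) = exp (2 * η₁) * exp (2 * η₂) := by
    rw [← exp_add, ← h₁, ← h₂]
    ring_nf
  rw [dx_dx_log (f := twoSolitonTau k₁ k₂ c₁ c₂ b₀) (contDiff_uncurry_planeWaves _ _ _ _)
    fun x t => (twoSolitonTau_pos _ _ _ _ _ hb₀ x t).ne']
  simp only [twoSolitonTau, dx_planeWaves, planeWaves, Fin.sum_univ_succ, Fin.sum_univ_zero,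
    Matrix.cons_val_zero, Matrix.cons_val_succ, zero_mul, sub_zero, exp_zero, hE, h₁, h₂]
  simp only [cosh_eq, two_mul, exp_add, exp_sub, exp_neg]
  field_simp
  linear_combination (-6 * (1 + b₀ * exp η₁ ^ 2 + b₀ * exp η₂ ^ 2 + exp η₁ ^ 2 * exp η₂ ^ 2) ^ 2
    * exp η₁ ^ 2 * exp η₂ ^ 2) * hb₁

end TwoSoliton

theorem sq_sqrt_phaseShift_mul {k₁ k₂ : ℝ} (hne : k₁ ≠ k₂) (hsum : k₁ ^ 3 + k₂ ^ 3 ≠ 0) :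
    √(((k₁ + k₂) ^ 3 * (k₁ ^ 2 + k₁ * k₂ + k₂ ^ 2)) / ((k₁ ^ 3 + k₂ ^ 3) * (k₁ - k₂) ^ 2)) ^ 2
      * ((k₁ - k₂) ^ 2 * (k₁ ^ 2 - k₁ * k₂ + k₂ ^ 2)) = (k₁ + k₂) ^ 2 * (k₁ ^ 2 + k₁ * k₂ + k₂ ^ 2) := by
  have hfac : k₁ ^ 3 + k₂ ^ 3 = (k₁ + k₂) * (k₁ ^ 2 - k₁ * k₂ + k₂ ^ 2) := by ring
  rw [hfac] at hsum ⊢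
  have hd : (k₁ - k₂) ^ 2 * (k₁ ^ 2 - k₁ * k₂ + k₂ ^ 2) ≠ 0 :=
    mul_ne_zero (pow_ne_zero 2 (sub_ne_zero.2 hne)) (right_ne_zero_of_mul hsum)
  have harg : (k₁ + k₂) ^ 3 * (k₁ ^ 2 + k₁ * k₂ + k₂ ^ 2)
      / ((k₁ + k₂) * (k₁ ^ 2 - k₁ * k₂ + k₂ ^ 2) * (k₁ - k₂) ^ 2)
      = (k₁ + k₂) ^ 2 * (k₁ ^ 2 + k₁ * k₂ + k₂ ^ 2) / ((k₁ - k₂) ^ 2 * (k₁ ^ 2 - k₁ * k₂ + k₂ ^ 2)) := by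
    have hk := left_ne_zero_of_mul hsum
    field_simp
  have hnum : 0 ≤ (k₁ + k₂) ^ 2 * (k₁ ^ 2 + k₁ * k₂ + k₂ ^ 2) :=
    mul_nonneg (sq_nonneg _) (by nlinarith [sq_nonneg (k₁ + k₂), sq_nonneg k₁, sq_nonneg k₂])
  have hden : 0 ≤ (k₁ - k₂) ^ 2 * (k₁ ^ 2 - k₁ * k₂ + k₂ ^ 2) :=
    mul_nonneg (sq_nonneg _) (by nlinarith [sq_nonneg (k₁ - k₂), sq_nonneg k₁, sq_nonneg k₂])
  rw [harg, sq_sqrt (div_nonneg hnum hden), div_mul_cancel₀ _ hd]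

theorem two_mul_b₁_eq {k₁ k₂ b₀ : ℝ} (hsum : k₁ ^ 3 + k₂ ^ 3 ≠ 0)
    (h : b₀ ^ 2 * ((k₁ - k₂) ^ 2 * (k₁ ^ 2 - k₁ * k₂ + k₂ ^ 2))
      = (k₁ + k₂) ^ 2 * (k₁ ^ 2 + k₁ * k₂ + k₂ ^ 2)) :
    2 * ((k₁ + k₂) ^ 3 / (k₁ ^ 3 + k₂ ^ 3) * (k₁ ^ 2 + k₂ ^ 2))
      = (k₁ + k₂) ^ 2 + b₀ ^ 2 * (k₁ - k₂) ^ 2 := by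
  have hfac : k₁ ^ 3 + k₂ ^ 3 = (k₁ + k₂) * (k₁ ^ 2 - k₁ * k₂ + k₂ ^ 2) := by ring
  rw [hfac] at hsum ⊢
  have hk := left_ne_zero_of_mul hsum
  have hq := right_ne_zero_of_mul hsum
  calc 2 * ((k₁ + k₂) ^ 3 / ((k₁ + k₂) * (k₁ ^ 2 - k₁ * k₂ + k₂ ^ 2)) * (k₁ ^ 2 + k₂ ^ 2))
      = 2 * (k₁ + k₂) ^ 2 * (k₁ ^ 2 + k₂ ^ 2) / (k₁ ^ 2 - k₁ * k₂ + k₂ ^ 2) := by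
        field_simp
    _ = (k₁ + k₂) ^ 2 + b₀ ^ 2 * (k₁ - k₂) ^ 2 := by
        rw [div_eq_iff hq]
        linear_combination -h

theorem two_soliton_solves_SK_general (k₁ k₂ c₁ c₂ b₀ b₁ : ℝ)
    (hne : k₁ ≠ k₂)
    (hsum : k₁^3 + k₂^3 ≠ 0)
    (η₁ η₂ : ℝ → ℝ → ℝ)
    (hη₁ : η₁ = fun x t => (1/2) * (k₁*x - k₁^5*t - c₁))
    (hη₂ : η₂ = fun x t => (1/2) * (k₂*x - k₂^5*t - c₂))
    (hb₀ : b₀ = Real.sqrt (((k₁+k₂)^3 * (k₁^2 + k₁*k₂ + k₂^2)) / ((k₁^3+k₂^3) * (k₁-k₂)^2)))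
    (hb₁ : b₁ = ((k₁+k₂)^3 / (k₁^3+k₂^3)) * (k₁^2+k₂^2))
    (u : ℝ → ℝ → ℝ)
    (hu : u = fun x t =>
      3 * (b₁ + k₂^2 * b₀ * Real.cosh (2 * η₁ x t) + k₁^2 * b₀ * Real.cosh (2 * η₂ x t))
        / (Real.cosh (η₁ x t + η₂ x t) + b₀ * Real.cosh (η₁ x t - η₂ x t))^2) :
    ∀ x t,
      dt u x t + dx (dx (dx (dx (dx u)))) x t + 5 * u x t * dx (dx (dx u)) x t
        + 5 * dx u x t * dx (dx u) x t + 5 * (u x t)^2 * dx u x t = 0 := by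
  have hshift := sq_sqrt_phaseShift_mul hne hsum
  rw [← hb₀] at hshift
  have hb₀_nonneg : 0 ≤ b₀ := hb₀ ▸ sqrt_nonneg _
  have hu' : u = fun x t => 6 * dx (dx fun x t => log (twoSolitonTau k₁ k₂ c₁ c₂ b₀ x t)) x t := by
    funext x t
    rw [hu, six_dx_dx_log_twoSolitonTau _ _ _ _ _ hb₀_nonneg (hb₁ ▸ two_mul_b₁_eq hsum hshift)
      (η₁ := η₁ x t) (η₂ := η₂ x t) (by rw [hη₁]; ring) (by rw [hη₂]; ring)]
  subst hu'
  exact sawadaKotera_of_hirotaSawadaKotera (contDiff_uncurry_planeWaves _ _ _ _)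
    (fun x t => (twoSolitonTau_pos _ _ _ _ _ hb₀_nonneg x t).ne')
    (hirotaSawadaKotera_twoSolitonTau _ _ _ _ _ hshift)

/-- The 2-soliton solution of the Sawada–Kotera equation: with
`η_j = (1/2)(k_j x - k_j⁵ t - c_j)`,
`b₀ = √(((k₁+k₂)³ (k₁²+k₁k₂+k₂²)) / ((k₁³+k₂³)(k₁-k₂)²))` and
`b₁ = ((k₁+k₂)³/(k₁³+k₂³)) (k₁²+k₂²)`, the function
`u = 3[b₁ + k₂² b₀ cosh(2η₁) + k₁² b₀ cosh(2η₂)] / [cosh(η₁+η₂) + b₀ cosh(η₁-η₂)]²`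
satisfies `u_t + u_xxxxx + 5 u u_xxx + 5 u_x u_xx + 5 u² u_x = 0`. -/
theorem two_soliton_solves_SK (k₁ k₂ c₁ c₂ b₀ b₁ : ℝ)
    (hk₁ : k₁ ≠ 0) (hk₂ : k₂ ≠ 0) (hne : k₁ ≠ k₂) (hne' : k₁ ≠ -k₂)
    (hsum : k₁^3 + k₂^3 ≠ 0)
    (η₁ η₂ : ℝ → ℝ → ℝ)
    (hη₁ : η₁ = fun x t => (1/2) * (k₁*x - k₁^5*t - c₁))
    (hη₂ : η₂ = fun x t => (1/2) * (k₂*x - k₂^5*t - c₂))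
    (hb₀ : b₀ = Real.sqrt (((k₁+k₂)^3 * (k₁^2 + k₁*k₂ + k₂^2)) / ((k₁^3+k₂^3) * (k₁-k₂)^2)))
    (hb₁ : b₁ = ((k₁+k₂)^3 / (k₁^3+k₂^3)) * (k₁^2+k₂^2))
    (hden : ∀ x t, Real.cosh (η₁ x t + η₂ x t) + b₀ * Real.cosh (η₁ x t - η₂ x t) ≠ 0)
    (u : ℝ → ℝ → ℝ)
    (hu : u = fun x t =>
      3 * (b₁ + k₂^2 * b₀ * Real.cosh (2 * η₁ x t) + k₁^2 * b₀ * Real.cosh (2 * η₂ x t))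
        / (Real.cosh (η₁ x t + η₂ x t) + b₀ * Real.cosh (η₁ x t - η₂ x t))^2) :
    ∀ x t,
      dt u x t + dx (dx (dx (dx (dx u)))) x t + 5 * u x t * dx (dx (dx u)) x t
        + 5 * dx u x t * dx (dx u) x t + 5 * (u x t)^2 * dx u x t = 0 :=
  two_soliton_solves_SK_general k₁ k₂ c₁ c₂ b₀ b₁ hne hsum η₁ η₂ hη₁ hη₂ hb₀ hb₁ u hu
end

section
/- If a smooth function u(x,t) solves the Sawada–Kotera equation and φ(x,t) solves both L φ = λ φ with L = ∂_x^3 + u ∂_x + u_x and φ_t = P φ with P = 9∂_x^5 + 15 u ∂_x^3 + 30 u_x ∂_x^2 + (5u^2 + 25 u_xx)∂_x + 10 u_xxx + 10 u u_x, then the compatibility condition (Lφ)_t = L_t φ + L φ_t holds and is equivalent to L_t = [P, L] acting on φ, which in turn is equivalent to λ-independent equation u_t + u_xxxxx + 5 u u_xxx + 5 u_x u_xx + 5 u^2 u_x = 0 multiplied by ∂_x applied to φ plus its x-derivative; in particular, the operator identity L_t - [P,L] = (u_t + u_xxxxx + 5 u u_xxx + 5 u_x u_xx + 5 u^2 u_x)∂_x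 + (u_t + u_xxxxx + 5 u u_xxx + 5 u_x u_xx + 5 u^2 u_x)_x holds as differential operators. -/
set_option maxHeartbeats 2000000


/-- The operator identity `L_t - [P,L] = SK(u) ∂_x + (SK(u))_x` for the bosonic Lax
pair of the Sawada–Kotera equation, where `L = ∂_x³ + u ∂_x + u_x`,
`P = 9∂_x⁵ + 15u∂_x³ + 30u_x∂_x² + (5u² + 25u_xx)∂_x + 10u_xxx + 10uu_x`, and
`SK(u) = u_t + u_xxxxx + 5uu_xxx + 5u_xu_xx + 5u²u_x`; here `L_t` acts by
differentiating the coefficients of `L` in time, and the identity is stated as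
applied to an arbitrary smooth function `φ` of `x`. -/
theorem lax_operator_identity (u : ℝ → ℝ → ℝ) (hu : ContDiff ℝ (⊤ : ℕ∞) (Function.uncurry u))
    (L P : ℝ → (ℝ → ℝ) → ℝ → ℝ)
    (hL : L = fun t f x => iteratedDeriv 3 f x + u x t * deriv f x + dx u x t * f x)
    (hP : P = fun t f x => 9 * iteratedDeriv 5 f x + 15 * u x t * iteratedDeriv 3 f x
      + 30 * dx u x t * iteratedDeriv 2 f x
      + (5 * (u x t)^2 + 25 * dx (dx u) x t) * deriv f x
      + (10 * dx (dx (dx u)) x t + 10 * u x t * dx u x t) * f x)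
    (sk : ℝ → ℝ → ℝ)
    (hsk : sk = fun x t =>
      dt u x t + dx (dx (dx (dx (dx u)))) x t + 5 * u x t * dx (dx (dx u)) x t
        + 5 * dx u x t * dx (dx u) x t + 5 * (u x t)^2 * dx u x t) :
    ∀ (φ : ℝ → ℝ), ContDiff ℝ (⊤ : ℕ∞) φ → ∀ t x,
      (dt u x t * deriv φ x + dt (dx u) x t * φ x)
          - (P t (L t φ) x - L t (P t φ) x)
        = sk x t * deriv φ x + dx sk x t * φ x := by
  subst hL hP hsk
  intro φ hφ t x
  -- spatial slice
  set v : ℝ → ℝ := fun y => u y t with hvdef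
  have hv : ContDiff ℝ (⊤ : ℕ∞) v := hu.comp (contDiff_id.prodMk contDiff_const)
  have e0 : ∀ y, u y t = v y := fun _ => rfl
  have e1 : ∀ y, dx u y t = deriv v y := fun _ => rfl
  have e2 : ∀ y, dx (dx u) y t = deriv (deriv v) y := fun _ => rfl
  have e3 : ∀ y, dx (dx (dx u)) y t = deriv (deriv (deriv v)) y := fun _ => rfl
  have e5 : ∀ y, dx (dx (dx (dx (dx u)))) y t = deriv (deriv (deriv (deriv (deriv v)))) y :=
    fun _ => rfl
  -- temporal derivative facts
  have hFd : Differentiable ℝ (Function.uncurry u) := hu.differentiable (by simp)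
  have hdx_eq : ∀ y s, dx u y s = fderiv ℝ (Function.uncurry u) (y, s) (1, 0) := by
    intro y s
    exact ((hFd (y, s)).hasFDerivAt.comp_hasDerivAt y
      ((hasDerivAt_id y).prodMk (hasDerivAt_const y s))).deriv
  have hdt_eq : ∀ y s, dt u y s = fderiv ℝ (Function.uncurry u) (y, s) (0, 1) := by
    intro y s
    exact ((hFd (y, s)).hasFDerivAt.comp_hasDerivAt s
      ((hasDerivAt_const s y).prodMk (hasDerivAt_id s))).deriv
  have hG : ContDiff ℝ 1 (fderiv ℝ (Function.uncurry u)) := hu.fderiv_right (WithTop.coe_le_coe.mpr le_top)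
  have hGd : Differentiable ℝ (fderiv ℝ (Function.uncurry u)) := hG.differentiable (by simp)
  have hwfun : (fun y => dt u y t) = fun y => fderiv ℝ (Function.uncurry u) (y, t) (0, 1) :=
    funext fun y => hdt_eq y t
  have hwd : Differentiable ℝ (fun y => dt u y t) := by
    rw [hwfun]
    exact (hGd.comp (differentiable_id.prodMk (differentiable_const t))).clm_apply
      (differentiable_const _)
  have hclairaut : dt (dx u) x t = deriv (fun y => dt u y t) x := by
    have hx : HasDerivAt (fun s : ℝ => fderiv ℝ (Function.uncurry u) (x, s))
        (fderiv ℝ (fderiv ℝ (Function.uncurry u)) (x, t) (0, 1)) t :=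
      (hGd (x, t)).hasFDerivAt.comp_hasDerivAt t
        ((hasDerivAt_const t x).prodMk (hasDerivAt_id t))
    have hx' : HasDerivAt (fun s : ℝ => fderiv ℝ (Function.uncurry u) (x, s) (1, 0))
        (fderiv ℝ (fderiv ℝ (Function.uncurry u)) (x, t) (0, 1) (1, 0)) t := by
      simpa using hx.clm_apply (hasDerivAt_const t ((1 : ℝ), (0 : ℝ)))
    have hy : HasDerivAt (fun y : ℝ => fderiv ℝ (Function.uncurry u) (y, t))
        (fderiv ℝ (fderiv ℝ (Function.uncurry u)) (x, t) (1, 0)) x :=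
      (hGd (x, t)).hasFDerivAt.comp_hasDerivAt x
        ((hasDerivAt_id x).prodMk (hasDerivAt_const x t))
    have hy' : HasDerivAt (fun y : ℝ => fderiv ℝ (Function.uncurry u) (y, t) (0, 1))
        (fderiv ℝ (fderiv ℝ (Function.uncurry u)) (x, t) (1, 0) (0, 1)) x := by
      simpa using hy.clm_apply (hasDerivAt_const x ((0 : ℝ), (1 : ℝ)))
    have hsymm : fderiv ℝ (fderiv ℝ (Function.uncurry u)) (x, t) (0, 1) (1, 0)
        = fderiv ℝ (fderiv ℝ (Function.uncurry u)) (x, t) (1, 0) (0, 1) :=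
      (hu.contDiffAt.isSymmSndFDerivAt (by rw [minSmoothness_of_isRCLikeNormedField]; exact WithTop.coe_le_coe.mpr le_top)).eq _ _
    have l1 : dt (dx u) x t = fderiv ℝ (fderiv ℝ (Function.uncurry u)) (x, t) (0, 1) (1, 0) := by
      have hfn : (fun s => dx u x s) = fun s => fderiv ℝ (Function.uncurry u) (x, s) (1, 0) :=
        funext fun s => hdx_eq x s
      show deriv (fun s => dx u x s) t = _
      rw [hfn]
      exact hx'.deriv
    have l2 : deriv (fun y => dt u y t) x
        = fderiv ℝ (fderiv ℝ (Function.uncurry u)) (x, t) (1, 0) (0, 1) := by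
      rw [hwfun]
      exact hy'.deriv
    rw [l1, l2, hsymm]
  -- the dx of sk, separated
  have hdxsk : dx (fun x' t' => dt u x' t' + dx (dx (dx (dx (dx u)))) x' t'
        + 5 * u x' t' * dx (dx (dx u)) x' t' + 5 * dx u x' t' * dx (dx u) x' t'
        + 5 * (u x' t')^2 * dx u x' t') x t
      = deriv (fun y => dt u y t + deriv (deriv (deriv (deriv (deriv v)))) y
        + 5 * v y * deriv (deriv (deriv v)) y + 5 * deriv v y * deriv (deriv v) y
        + 5 * (v y)^2 * deriv v y) x := rfl
  -- differentiability of iterated derivatives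
  have hdiffv : ∀ k : ℕ, Differentiable ℝ (deriv^[k] v) := fun k =>
    (ContDiff.iterate_deriv k (hv.of_le (by simp))).differentiable (by simp)
  have hdiffp : ∀ k : ℕ, Differentiable ℝ (deriv^[k] φ) := fun k =>
    (ContDiff.iterate_deriv k (hφ.of_le (by simp))).differentiable (by simp)
  have Dv0 : Differentiable ℝ (v) := hdiffv 0
  have Dv1 : Differentiable ℝ (deriv v) := hdiffv 1
  have Dv2 : Differentiable ℝ (deriv (deriv v)) := hdiffv 2
  have Dv3 : Differentiable ℝ (deriv (deriv (deriv v))) := hdiffv 3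
  have Dv4 : Differentiable ℝ (deriv (deriv (deriv (deriv v)))) := hdiffv 4
  have Dv5 : Differentiable ℝ (deriv (deriv (deriv (deriv (deriv v))))) := hdiffv 5
  have Dv6 : Differentiable ℝ (deriv (deriv (deriv (deriv (deriv (deriv v)))))) := hdiffv 6
  have Dv7 : Differentiable ℝ (deriv (deriv (deriv (deriv (deriv (deriv (deriv v))))))) := hdiffv 7
  have Dp0 : Differentiable ℝ (φ) := hdiffp 0
  have Dp1 : Differentiable ℝ (deriv φ) := hdiffp 1
  have Dp2 : Differentiable ℝ (deriv (deriv φ)) := hdiffp 2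
  have Dp3 : Differentiable ℝ (deriv (deriv (deriv φ))) := hdiffp 3
  have Dp4 : Differentiable ℝ (deriv (deriv (deriv (deriv φ)))) := hdiffp 4
  have Dp5 : Differentiable ℝ (deriv (deriv (deriv (deriv (deriv φ))))) := hdiffp 5
  have Dp6 : Differentiable ℝ (deriv (deriv (deriv (deriv (deriv (deriv φ)))))) := hdiffp 6
  have Dp7 : Differentiable ℝ (deriv (deriv (deriv (deriv (deriv (deriv (deriv φ))))))) := hdiffp 7
  have Dp8 : Differentiable ℝ (deriv (deriv (deriv (deriv (deriv (deriv (deriv (deriv φ)))))))) := hdiffp 8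
  clear hdiffv hdiffp
  -- iterated derivative conversions
  have i2 : ∀ f : ℝ → ℝ, iteratedDeriv 2 f = deriv (deriv f) := fun f => iteratedDeriv_eq_iterate
  have i3 : ∀ f : ℝ → ℝ, iteratedDeriv 3 f = deriv (deriv (deriv f)) := fun f =>
    iteratedDeriv_eq_iterate
  have i5 : ∀ f : ℝ → ℝ, iteratedDeriv 5 f = deriv (deriv (deriv (deriv (deriv f)))) := fun f =>
    iteratedDeriv_eq_iterate
  -- derivative expansion lemmas
  have hL1 : deriv (fun y => deriv (deriv (deriv φ)) y + v y * deriv φ y + deriv v y * φ y) = fun y => φ y * deriv (deriv v) y + 2 * deriv φ y * deriv v y + deriv (deriv φ) y * v y + deriv (deriv (deriv (deriv φ))) y := by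
    funext y
    simp (disch := fun_prop) only [deriv_fun_add, deriv_fun_mul, deriv_const_mul, deriv_fun_pow, deriv_const']
    push_cast
    ring
  have hL2 : deriv (fun y => φ y * deriv (deriv v) y + 2 * deriv φ y * deriv v y + deriv (deriv φ) y * v y + deriv (deriv (deriv (deriv φ))) y) = fun y => φ y * deriv (deriv (deriv v)) y + 3 * deriv φ y * deriv (deriv v) y + 3 * deriv (deriv φ) y * deriv v y + deriv (deriv (deriv φ)) y * v y + deriv (deriv (deriv (deriv (deriv φ)))) y := by
    funext y
    simp (disch := fun_prop) only [deriv_fun_add, deriv_fun_mul, deriv_const_mul, deriv_fun_pow, deriv_const']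
    push_cast
    ring
  have hL3 : deriv (fun y => φ y * deriv (deriv (deriv v)) y + 3 * deriv φ y * deriv (deriv v) y + 3 * deriv (deriv φ) y * deriv v y + deriv (deriv (deriv φ)) y * v y + deriv (deriv (deriv (deriv (deriv φ)))) y) = fun y => φ y * deriv (deriv (deriv (deriv v))) y + 4 * deriv φ y * deriv (deriv (deriv v)) y + 6 * deriv (deriv φ) y * deriv (deriv v) y + 4 * deriv (deriv (deriv φ)) y * deriv v y + deriv (deriv (deriv (deriv φ))) y * v y + deriv (deriv (deriv (deriv (deriv (deriv φ))))) y := by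
    funext y
    simp (disch := fun_prop) only [deriv_fun_add, deriv_fun_mul, deriv_const_mul, deriv_fun_pow, deriv_const']
    push_cast
    ring
  have hL4 : deriv (fun y => φ y * deriv (deriv (deriv (deriv v))) y + 4 * deriv φ y * deriv (deriv (deriv v)) y + 6 * deriv (deriv φ) y * deriv (deriv v) y + 4 * deriv (deriv (deriv φ)) y * deriv v y + deriv (deriv (deriv (deriv φ))) y * v y + deriv (deriv (deriv (deriv (deriv (deriv φ))))) y) = fun y => φ y * deriv (deriv (deriv (deriv (deriv v)))) y + 5 * deriv φ y * deriv (deriv (deriv (deriv v))) y + 10 * deriv (deriv φ) y * deriv (deriv (deriv v)) y + 10 * deriv (deriv (deriv φ)) y * deriv (deriv v) y + 5 * deriv (deriv (deriv (deriv φ))) y * deriv v y + deriv (deriv (deriv (deriv (deriv φ)))) y * v y + deriv (deriv (deriv (deriv (deriv (deriv (deriv φ)))))) y := by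
    funext y
    simp (disch := fun_prop) only [deriv_fun_add, deriv_fun_mul, deriv_const_mul, deriv_fun_pow, deriv_const']
    push_cast
    ring
  have hL5 : deriv (fun y => φ y * deriv (deriv (deriv (deriv (deriv v)))) y + 5 * deriv φ y * deriv (deriv (deriv (deriv v))) y + 10 * deriv (deriv φ) y * deriv (deriv (deriv v)) y + 10 * deriv (deriv (deriv φ)) y * deriv (deriv v) y + 5 * deriv (deriv (deriv (deriv φ))) y * deriv v y + deriv (deriv (deriv (deriv (deriv φ)))) y * v y + deriv (deriv (deriv (deriv (deriv (deriv (deriv φ)))))) y) = fun y => φ y * deriv (deriv (deriv (deriv (deriv (deriv v))))) y + 6 * deriv φ y * deriv (deriv (deriv (deriv (deriv v)))) y + 15 * deriv (deriv φ) y * deriv (deriv (deriv (deriv v))) y + 20 * deriv (deriv (deriv φ)) y * deriv (deriv (deriv v)) y + 15 * deriv (deriv (deriv (deriv φ))) y * deriv (deriv v) y + 6 * deriv (deriv (deriv (deriv (deriv φ)))) y * deriv v y + deriv (deriv (deriv (deriv (deriv (deriv φ))))) y * v y + deriv (deriv (deriv (deriv (deriv (deriv (deriv (deriv φ))))))) y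 := by
    funext y
    simp (disch := fun_prop) only [deriv_fun_add, deriv_fun_mul, deriv_const_mul, deriv_fun_pow, deriv_const']
    push_cast
    ring
  have hP1 : deriv (fun y => 9 * deriv (deriv (deriv (deriv (deriv φ)))) y + 15 * v y * deriv (deriv (deriv φ)) y + 30 * deriv v y * deriv (deriv φ) y + (5 * v y ^ 2 + 25 * deriv (deriv v) y) * deriv φ y + (10 * deriv (deriv (deriv v)) y + 10 * v y * deriv v y) * φ y) = fun y => 10 * φ y * v y * deriv (deriv v) y + 10 * φ y * deriv v y * deriv v y + 10 * φ y * deriv (deriv (deriv (deriv v))) y + 20 * deriv φ y * v y * deriv v y + 35 * deriv φ y * deriv (deriv (deriv v)) y + 5 * deriv (deriv φ) y * v y * v y + 55 * deriv (deriv φ) y * deriv (deriv v) y + 45 * deriv (deriv (deriv φ)) y * deriv v y + 15 * deriv (deriv (deriv (deriv φ))) y * v y + 9 * deriv (deriv (deriv (deriv (deriv (deriv φ))))) y := by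
    funext y
    simp (disch := fun_prop) only [deriv_fun_add, deriv_fun_mul, deriv_const_mul, deriv_fun_pow, deriv_const']
    push_cast
    ring
  have hP2 : deriv (fun y => 10 * φ y * v y * deriv (deriv v) y + 10 * φ y * deriv v y * deriv v y + 10 * φ y * deriv (deriv (deriv (deriv v))) y + 20 * deriv φ y * v y * deriv v y + 35 * deriv φ y * deriv (deriv (deriv v)) y + 5 * deriv (deriv φ) y * v y * v y + 55 * deriv (deriv φ) y * deriv (deriv v) y + 45 * deriv (deriv (deriv φ)) y * deriv v y + 15 * deriv (deriv (deriv (deriv φ))) y * v y + 9 * deriv (deriv (deriv (deriv (deriv (deriv φ))))) y) = fun y => 10 * φ y * v y * deriv (deriv (deriv v)) y + 30 * φ y * deriv v y * deriv (deriv v) y + 10 * φ y * deriv (deriv (deriv (deriv (deriv v)))) y + 30 * deriv φ y * v y * deriv (deriv v) y + 30 * deriv φ y * deriv v y * deriv v y + 45 * deriv φ y * deriv (deriv (deriv (deriv v))) y + 30 * deriv (deriv φ) y * v y * deriv v y + 90 * deriv (deriv φ) y * deriv (deriv (deriv v)) y + 5 * deriv (deriv (deriv φ)) y * v y * v y + 100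 * deriv (deriv (deriv φ)) y * deriv (deriv v) y + 60 * deriv (deriv (deriv (deriv φ))) y * deriv v y + 15 * deriv (deriv (deriv (deriv (deriv φ)))) y * v y + 9 * deriv (deriv (deriv (deriv (deriv (deriv (deriv φ)))))) y := by
    funext y
    simp (disch := fun_prop) only [deriv_fun_add, deriv_fun_mul, deriv_const_mul, deriv_fun_pow, deriv_const']
    push_cast
    ring
  have hP3 : deriv (fun y => 10 * φ y * v y * deriv (deriv (deriv v)) y + 30 * φ y * deriv v y * deriv (deriv v) y + 10 * φ y * deriv (deriv (deriv (deriv (deriv v)))) y + 30 * deriv φ y * v y * deriv (deriv v) y + 30 * deriv φ y * deriv v y * deriv v y + 45 * deriv φ y * deriv (deriv (deriv (deriv v))) y + 30 * deriv (deriv φ) y * v y * deriv v y + 90 * deriv (deriv φ) y * deriv (deriv (deriv v)) y + 5 * deriv (deriv (deriv φ)) y * v y * v y + 100 * deriv (deriv (deriv φ)) y * deriv (deriv v) y + 60 * deriv (deriv (deriv (deriv φ))) y * deriv v y + 15 * deriv (deriv (deriv (deriv (deriv φ)))) y * v y + 9 * deriv (deriv (deriv (deriv (deriv (deriv (deriv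 φ)))))) y) = fun y => 10 * φ y * v y * deriv (deriv (deriv (deriv v))) y + 40 * φ y * deriv v y * deriv (deriv (deriv v)) y + 30 * φ y * deriv (deriv v) y * deriv (deriv v) y + 10 * φ y * deriv (deriv (deriv (deriv (deriv (deriv v))))) y + 40 * deriv φ y * v y * deriv (deriv (deriv v)) y + 120 * deriv φ y * deriv v y * deriv (deriv v) y + 55 * deriv φ y * deriv (deriv (deriv (deriv (deriv v)))) y + 60 * deriv (deriv φ) y * v y * deriv (deriv v) y + 60 * deriv (deriv φ) y * deriv v y * deriv v y + 135 * deriv (deriv φ) y * deriv (deriv (deriv (deriv v))) y + 40 * deriv (deriv (deriv φ)) y * v y * deriv v y + 190 * deriv (deriv (deriv φ)) y * deriv (deriv (deriv v)) y + 5 * deriv (deriv (deriv (deriv φ))) y * v y * v y + 160 * deriv (deriv (deriv (deriv φ))) y * deriv (deriv v) y + 75 * deriv (deriv (deriv (deriv (deriv φ)))) y * deriv v y + 15 * deriv (deriv (deriv (deriv (deriv (deriv φ))))) y * v y + 9 * deriv (deriv (deriv (deriv (deriv (deriv (deriv (deriv φ))))))) y := by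
    funext y
    simp (disch := fun_prop) only [deriv_fun_add, deriv_fun_mul, deriv_const_mul, deriv_fun_pow, deriv_const']
    push_cast
    ring
  have hskx : deriv (fun y => dt u y t + deriv (deriv (deriv (deriv (deriv v)))) y
        + 5 * v y * deriv (deriv (deriv v)) y + 5 * deriv v y * deriv (deriv v) y
        + 5 * (v y)^2 * deriv v y) x
      = deriv (fun y => dt u y t) x + (5 * v x * v x * deriv (deriv v) x + 10 * v x * deriv v x * deriv v x + 5 * v x * deriv (deriv (deriv (deriv v))) x + 10 * deriv v x * deriv (deriv (deriv v)) x + 5 * deriv (deriv v) x * deriv (deriv v) x + deriv (deriv (deriv (deriv (deriv (deriv v))))) x) := by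
    simp (disch := fun_prop) only [deriv_fun_add, deriv_fun_mul, deriv_const_mul, deriv_fun_pow, deriv_const']
    push_cast
    ring
  simp only []
  rw [hdxsk, hskx, hclairaut]
  simp only [e0, e1, e2, e3, e5, i2, i3, i5]
  simp only [hL1, hL2, hL3, hL4, hL5, hP1, hP2, hP3]
  beta_reduce
  ring
end
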